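/- Let T and Δ be independent exponentially distributed random variables with rates λ_T > 0 and λ_Δ > 0, and let x > 0. If λ_Δ > λ_T and λ_Δ·exp(−x·λ_Δ) < λ_T·exp(−x·λ_T), then P(Δ < x and x < Δ + T) > P(x < T): a strictly positive object fetch delay strictly increases the hit probability of a cache fed by a periodic request stream with period x. -/

import Mathlib

open MeasureTheory ProbabilityTheory Real Set

/-! Conditioning on `Δ = d < x`, the hit event is `T > x - d`, so its probability is the
convolution
`∫₀ˣ λ_Δ e^{-λ_Δ d} e^{-λ_T (x - d)} dd = λ_Δ / (λ_Δ - λ_T) · (e^{-λ_T x} - e^{-λ_Δ x})`.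
Its excess over `P(x < T) = e^{-λ_T x}` is `(λ_T e^{-λ_T x} - λ_Δ e^{-λ_Δ x}) / (λ_Δ - λ_T)`,
which is positive exactly under the hypothesis on the rates. -/

lemma expMeasure_eq_withDensity (r : ℝ) :
    expMeasure r = volume.withDensity (exponentialPDF r) := rfl

lemma expMeasure_Ioi {r : ℝ} (hr : 0 < r) {y : ℝ} (hy : 0 ≤ y) :
    expMeasure r (Ioi y) = ENNReal.ofReal (exp (-(r * y))) := by
  have := isProbabilityMeasure_expMeasure hr
  rw [← compl_Iic, prob_compl_eq_one_sub measurableSet_Iic, expMeasure_eq_withDensity,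
    withDensity_apply _ measurableSet_Iic, lintegral_exponentialPDF_eq_antiDeriv hr, if_pos hy,
    ← ENNReal.ofReal_one, ← ENNReal.ofReal_sub 1
      (sub_nonneg.2 (exp_le_one_iff.2 (neg_nonpos.2 (mul_nonneg hr.le hy)))), sub_sub_cancel]

lemma setLIntegral_Iio_expMeasure (r : ℝ) {f : ℝ → ENNReal} (hf : Measurable f) {x : ℝ}
    (hx : 0 ≤ x) :
    ∫⁻ d in Iio x, f d ∂expMeasure r
      = ∫⁻ d in Ico 0 x, ENNReal.ofReal (r * exp (-(r * d))) * f d := by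
  have hpdf : Measurable (exponentialPDF r) := (measurable_exponentialPDFReal r).ennreal_ofReal
  rw [expMeasure_eq_withDensity,
    setLIntegral_withDensity_eq_setLIntegral_mul _ hpdf hf measurableSet_Iio,
    ← Iio_union_Ico_eq_Iio hx,
    lintegral_union measurableSet_Ico ((Iio_disjoint_Ici le_rfl).mono_right Ico_subset_Ici_self),
    setLIntegral_eq_zero measurableSet_Iio fun d hd ↦ by simp [exponentialPDF_of_neg hd.out],
    zero_add]
  exact setLIntegral_congr_fun measurableSet_Ico fun d hd ↦ by
    simp [exponentialPDF_of_nonneg hd.1]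

lemma measurableSet_setOf_lt_lt_add (x : ℝ) :
    MeasurableSet {p : ℝ × ℝ | p.1 < x ∧ x < p.1 + p.2} :=
  (measurableSet_lt measurable_fst measurable_const).inter
    (measurableSet_lt measurable_const (measurable_fst.add measurable_snd))

lemma prod_setOf_lt_lt_add (ν ρ : Measure ℝ) [SFinite ρ] (x : ℝ) :
    ν.prod ρ {p | p.1 < x ∧ x < p.1 + p.2} = ∫⁻ d in Iio x, ρ (Ioi (x - d)) ∂ν := by
  rw [Measure.prod_apply (measurableSet_setOf_lt_lt_add x),
    ← lintegral_indicator measurableSet_Iio]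
  congr 1 with d
  by_cases hd : d < x
  · rw [indicator_of_mem (mem_Iio.2 hd)]
    congr 1 with t
    simp [hd, sub_lt_iff_lt_add']
  · simp [hd]

lemma integral_mul_exp_mul_exp_sub {a b : ℝ} (hab : a ≠ b) (x : ℝ) :
    ∫ d in (0 : ℝ)..x, a * exp (-(a * d)) * exp (-(b * (x - d)))
      = a / (a - b) * (exp (-(b * x)) - exp (-(a * x))) := by
  have hba : b - a ≠ 0 := sub_ne_zero.2 hab.symm
  have hintegrand : ∀ d, a * exp (-(a * d)) * exp (-(b * (x - d)))
      = a * exp (-(b * x)) * exp ((b - a) * d) := fun d ↦ by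
    rw [mul_assoc, mul_assoc, ← exp_add, ← exp_add]; ring_nf
  simp only [hintegrand, intervalIntegral.integral_const_mul,
    intervalIntegral.integral_comp_mul_left (fun y ↦ exp y) hba, integral_exp, mul_zero, exp_zero,
    smul_eq_mul]
  have : exp (-(b * x)) * exp ((b - a) * x) = exp (-(a * x)) := by rw [← exp_add]; ring_nf
  rw [← neg_sub b a, div_neg]
  linear_combination (a * (b - a)⁻¹) * this

lemma expMeasure_prod_setOf_lt_lt_add {a b : ℝ} (ha : 0 ≤ a) (hb : 0 < b) (hab : a ≠ b)
    {x : ℝ} (hx : 0 ≤ x) :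
    (expMeasure a).prod (expMeasure b) {p | p.1 < x ∧ x < p.1 + p.2}
      = ENNReal.ofReal (a / (a - b) * (exp (-(b * x)) - exp (-(a * x)))) := by
  have := isProbabilityMeasure_expMeasure hb
  have hslice : EqOn (fun d ↦ expMeasure b (Ioi (x - d)))
      (fun d ↦ ENNReal.ofReal (exp (-(b * (x - d))))) (Iio x) := fun d hd ↦
    expMeasure_Ioi hb (sub_nonneg.2 hd.out.le)
  have hint : IntegrableOn (fun d ↦ a * exp (-(a * d)) * exp (-(b * (x - d)))) (Ico 0 x) :=
    (Continuous.integrableOn_Icc (by fun_prop)).mono_set Ico_subset_Icc_self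
  rw [prod_setOf_lt_lt_add, setLIntegral_congr_fun measurableSet_Iio hslice,
    setLIntegral_Iio_expMeasure a (by fun_prop) hx, ← integral_mul_exp_mul_exp_sub hab,
    intervalIntegral.integral_of_le hx, ← setIntegral_congr_set Ico_ae_eq_Ioc,
    ofReal_integral_eq_lintegral_ofReal hint (ae_of_all _ fun d ↦ by positivity)]
  simp only [ENNReal.ofReal_mul (mul_nonneg ha (exp_pos _).le)]

lemma exp_neg_mul_lt_div_mul_sub_exp {a b x : ℝ} (hba : b < a)
    (h : a * exp (-(a * x)) < b * exp (-(b * x))) :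
    exp (-(b * x)) < a / (a - b) * (exp (-(b * x)) - exp (-(a * x))) := by
  rw [div_mul_eq_mul_div, lt_div_iff₀ (sub_pos.2 hba)]
  linarith

/-- Let `T` and `Δ` be independent exponentials with rates `0 < lamT < lamD` and let
`x > 0` be the deterministic inter-request time of a periodic request stream. If
`lamD·exp(-x·lamD) < lamT·exp(-x·lamT)`, then `P(Δ < x < Δ + T) > P(x < T)`: a strictly
positive object fetch delay strictly increases the hit probability. -/
theorem delay_strictly_improves_hit_probability
    {Ω : Type*} [MeasurableSpace Ω] (μ : Measure Ω) [IsProbabilityMeasure μ]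
    (T Δ : Ω → ℝ) (lamT lamD : ℝ) (hlamT : 0 < lamT) (hlt : lamT < lamD)
    (hmT : Measurable T) (hmΔ : Measurable Δ)
    (hT : μ.map T = expMeasure lamT) (hΔ : μ.map Δ = expMeasure lamD)
    (hindep : IndepFun T Δ μ) (x : ℝ) (hx : 0 < x)
    (hineq : lamD * Real.exp (-x * lamD) < lamT * Real.exp (-x * lamT)) :
    (μ {ω | Δ ω < x ∧ x < Δ ω + T ω}).toReal > (μ {ω | x < T ω}).toReal := by
  have hmiss : μ {ω | x < T ω} = ENNReal.ofReal (exp (-(lamT * x))) := by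
    rw [← expMeasure_Ioi hlamT hx.le, ← hT, Measure.map_apply hmT measurableSet_Ioi]
    rfl
  have hlaw : μ.map (fun ω ↦ (Δ ω, T ω)) = (expMeasure lamD).prod (expMeasure lamT) := by
    rw [← hΔ, ← hT]
    exact hindep.symm.map_prod_eq_prod_map_map hmΔ.aemeasurable hmT.aemeasurable
  have hhit : μ {ω | Δ ω < x ∧ x < Δ ω + T ω}
      = ENNReal.ofReal (lamD / (lamD - lamT) * (exp (-(lamT * x)) - exp (-(lamD * x)))) := by
    rw [← expMeasure_prod_setOf_lt_lt_add (hlamT.trans hlt).le hlamT hlt.ne' hx.le, ← hlaw,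
      Measure.map_apply (hmΔ.prodMk hmT) (measurableSet_setOf_lt_lt_add x)]
    rfl
  simp only [neg_mul, mul_comm x] at hineq
  have hgain := exp_neg_mul_lt_div_mul_sub_exp hlt hineq
  rw [hmiss, hhit, ENNReal.toReal_ofReal (exp_pos _).le,
    ENNReal.toReal_ofReal ((exp_pos _).le.trans hgain.le)]
  exact hgain
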